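/- (Uniform negative upper bound for the Bessemoulin-Chatard flux near c_L = 1.) Fix M > 0 and set α = B(2M)/(4·B(-2M)) ∈ (0, 1/2). Then for all c_K ∈ (0, α], all c_L ∈ [1/2, 1), and all Φ_K, Φ_L with |Φ_L - Φ_K| ≤ 2M, the Bessemoulin-Chatard flux F = dr(c_K,c_L)·( B((Φ_L - Φ_K)/dr(c_K,c_L))·c_K - B((Φ_K - Φ_L)/dr(c_K,c_L))·c_L ) satisfies F ≤ -B(2M)/4, where dr(c_K,c_L) = (h(c_K) - h(c_L))/(log c_K - log c_L) ≥ 1 for c_K ≠ c_L (and dr(c,c) = 1/(1-c)). -/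

import Mathlib

/-- The Bernoulli function `B(u) = u / (exp u - 1)` for `u ≠ 0`, extended by `B 0 = 1`. -/
noncomputable def bernoulliB (u : ℝ) : ℝ := if u = 0 then 1 else u / (Real.exp u - 1)

/-- The chemical potential `h(c) = log (c / (1-c))`. -/
noncomputable def hF (c : ℝ) : ℝ := Real.log (c / (1 - c))

/-- The Bessemoulin-Chatard face diffusion coefficient. -/
noncomputable def drF (cK cL : ℝ) : ℝ :=
  if cK = cL then 1 / (1 - cK) else (hF cK - hF cL) / (Real.log cK - Real.log cL)

noncomputable def Gaux (u : ℝ) : ℝ := ∫ x in (0:ℝ)..1, Real.exp (u * x)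

lemma Gaux_intble (u : ℝ) : IntervalIntegrable (fun x => Real.exp (u * x)) MeasureTheory.volume 0 1 :=
  (Real.continuous_exp.comp (continuous_const.mul continuous_id)).intervalIntegrable 0 1

lemma Gaux_pos (u : ℝ) : 0 < Gaux u :=
  intervalIntegral.intervalIntegral_pos_of_pos (Gaux_intble u)
    (fun x => Real.exp_pos _) one_pos

lemma Gaux_mono {s t : ℝ} (h : s ≤ t) : Gaux s ≤ Gaux t := by
  apply intervalIntegral.integral_mono_on zero_le_one (Gaux_intble s) (Gaux_intble t)
  intro x hx
  exact Real.exp_le_exp.mpr (mul_le_mul_of_nonneg_right h hx.1)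

lemma bernoulliB_eq (u : ℝ) : bernoulliB u = 1 / Gaux u := by
  unfold bernoulliB Gaux
  rcases eq_or_ne u 0 with h | h
  · simp [h]
  · rw [if_neg h, intervalIntegral.integral_comp_mul_left (fun x => Real.exp x) h]
    rw [mul_zero, mul_one, integral_exp, smul_eq_mul]
    rw [Real.exp_zero]
    field_simp

lemma bernoulliB_pos (u : ℝ) : 0 < bernoulliB u := by
  rw [bernoulliB_eq]; exact div_pos one_pos (Gaux_pos u)

lemma bernoulliB_anti {s t : ℝ} (h : s ≤ t) : bernoulliB t ≤ bernoulliB s := by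
  rw [bernoulliB_eq, bernoulliB_eq]
  exact one_div_le_one_div_of_le (Gaux_pos s) (Gaux_mono h)

theorem bessemoulinChatard_flux_negative_bound (M : ℝ) (hM : 0 < M) :
    bernoulliB (2 * M) / (4 * bernoulliB (-(2 * M))) ∈ Set.Ioo (0 : ℝ) (1 / 2) ∧
    ∀ cK ∈ Set.Ioc (0 : ℝ) (bernoulliB (2 * M) / (4 * bernoulliB (-(2 * M)))),
      ∀ cL ∈ Set.Ico (1 / 2 : ℝ) 1, ∀ ΦK ΦL : ℝ, |ΦL - ΦK| ≤ 2 * M →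
        drF cK cL * (bernoulliB ((ΦL - ΦK) / drF cK cL) * cK
            - bernoulliB ((ΦK - ΦL) / drF cK cL) * cL)
          ≤ - (bernoulliB (2 * M) / 4) := by
  have hBpos := bernoulliB_pos (2 * M)
  have hBneg := bernoulliB_pos (-(2 * M))
  have hBle : bernoulliB (2 * M) ≤ bernoulliB (-(2 * M)) :=
    bernoulliB_anti (by linarith)
  have halpha_pos : 0 < bernoulliB (2 * M) / (4 * bernoulliB (-(2 * M))) := by positivity
  have halpha_lt : bernoulliB (2 * M) / (4 * bernoulliB (-(2 * M))) < 1 / 2 := by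
    rw [div_lt_div_iff₀ (by positivity) (by norm_num)]
    nlinarith
  refine ⟨⟨halpha_pos, halpha_lt⟩, ?_⟩
  intro cK hcK cL hcL ΦK ΦL hΦ
  obtain ⟨hK0, hKα⟩ := hcK
  obtain ⟨hL12, hL1⟩ := hcL
  have hKlt : cK < cL := by linarith [hKα.trans_lt halpha_lt]
  have hK1 : cK < 1 := by linarith
  -- dr ≥ 1
  have hlogKL : Real.log cK < Real.log cL :=
    Real.log_lt_log hK0 hKlt
  have hlog1 : Real.log (1 - cL) < Real.log (1 - cK) :=
    Real.log_lt_log (by linarith) (by linarith)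
  have hdr : drF cK cL = (hF cK - hF cL) / (Real.log cK - Real.log cL) := by
    rw [drF, if_neg hKlt.ne]
  have hhK : hF cK = Real.log cK - Real.log (1 - cK) :=
    Real.log_div (ne_of_gt hK0) (by linarith)
  have hhL : hF cL = Real.log cL - Real.log (1 - cL) :=
    Real.log_div (by positivity) (by linarith)
  have hdr1 : 1 ≤ drF cK cL := by
    rw [hdr, hhK, hhL, le_div_iff_of_neg (by linarith)]
    linarith
  have hdrpos : 0 < drF cK cL := lt_of_lt_of_le one_pos hdr1
  set d := drF cK cL
  set t := (ΦL - ΦK) / d with ht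
  have habs : |t| ≤ 2 * M := by
    rw [ht, abs_div, abs_of_pos hdrpos]
    calc |ΦL - ΦK| / d ≤ |ΦL - ΦK| / 1 := by
          apply div_le_div_of_nonneg_left (abs_nonneg _) one_pos hdr1
      _ ≤ 2 * M := by simpa using hΦ
  have ht2 : (ΦK - ΦL) / d = -t := by rw [ht]; ring
  rw [ht2]
  have h1 : bernoulliB t ≤ bernoulliB (-(2 * M)) :=
    bernoulliB_anti (by linarith [neg_abs_le t, abs_le.mp habs])
  have h2 : bernoulliB (2 * M) ≤ bernoulliB (-t) := by
    apply bernoulliB_anti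
    have := (abs_le.mp habs).1
    linarith
  have hinner : bernoulliB t * cK - bernoulliB (-t) * cL ≤ - (bernoulliB (2 * M) / 4) := by
    have e1 : bernoulliB t * cK ≤ bernoulliB (-(2 * M)) * cK :=
      mul_le_mul_of_nonneg_right h1 hK0.le
    have e2 : bernoulliB (-(2 * M)) * cK ≤ bernoulliB (2 * M) / 4 := by
      calc bernoulliB (-(2 * M)) * cK ≤ bernoulliB (-(2 * M)) *
            (bernoulliB (2 * M) / (4 * bernoulliB (-(2 * M)))) :=
            mul_le_mul_of_nonneg_left hKα hBneg.le
        _ = bernoulliB (2 * M) / 4 := by field_simp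
    have e3 : bernoulliB (2 * M) / 2 ≤ bernoulliB (-t) * cL := by
      calc bernoulliB (2 * M) / 2 = bernoulliB (2 * M) * (1/2) := by ring
        _ ≤ bernoulliB (-t) * cL := mul_le_mul h2 hL12 (by norm_num) (bernoulliB_pos _).le
    linarith
  calc d * (bernoulliB t * cK - bernoulliB (-t) * cL)
      ≤ 1 * (bernoulliB t * cK - bernoulliB (-t) * cL) := by
        apply mul_le_mul_of_nonpos_right hdr1 ?_
        nlinarith [bernoulliB_pos t, bernoulliB_pos (-t)]
    _ ≤ - (bernoulliB (2 * M) / 4) := by linarith
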